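/- Let $C \subset \mathbb{R}^n$ be a pointed closed convex cone with nonempty interior, $\omega \subset \Omega_C$ a nonempty compact set, and $f_j : \omega \to (0, \infty)$ continuous functions for $j \in \mathbb{N}_0$ such that $f_j \to f_0$ uniformly on $\omega$. Let $K_j$ be the Wulff shape associated with $(C, \omega, f_j)$. Then $K_j \to K_0$ in the sense that $K_j \cap C_t \to K_0 \cap C_t$ in the Hausdorff metric for all sufficiently large $t$, where $C_t = C \cap \{x : \langle x, w \rangle \le t\}$ for a fixed unit vector $w$ with $\langle x, w\rangle > 0$ on $C \setminus \{0\}$. -/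

import Mathlib

open Set Pointwise MeasureTheory RealInnerProductSpace Filter
open scoped Topology

/-! Write `W(g)` for the Wulff shape of `g` and `T_t = C ∩ {⟪x, w⟫ ≤ t}`. If `|f - g| ≤ η` on `ω`,
both `W(f)` and `W(g)` lie between `W(g + η)` and `W(g - η)`, so it suffices to move every point
`x` of `W(g - η) ∩ T_t` by `O(η)` into `W(g + η) ∩ T_t`. Since `g ≥ m > 0`, the dilate `λ • x`
with `λ = (m + η) / (m - η)` lies in `W(g + η)`; if it leaves `T_t`, pull it back along the
segment towards a fixed point `z ∈ W(g + 1) ∩ T_{t/2}`, which exists because `ω` is a compact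
subset of the interior of the polar cone. As `‖·‖` is bounded by a multiple of `⟪·, w⟫` on `C`,
both moves have length `O(η t)`. -/

theorem Metric.hausdorffDist_le_of_subset_of_forall {α : Type*} [PseudoMetricSpace α]
    {P Q S T : Set α} {r : ℝ} (hr : 0 ≤ r) (hQS : Q ⊆ S) (hSP : S ⊆ P) (hQT : Q ⊆ T)
    (hTP : T ⊆ P) (hPQ : ∀ x ∈ P, ∃ y ∈ Q, dist x y ≤ r) : hausdorffDist S T ≤ r :=
  hausdorffDist_le_of_mem_dist hr
    (fun x hx ↦ let ⟨y, hy, hxy⟩ := hPQ x (hSP hx); ⟨y, hQT hy, hxy⟩)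
    (fun x hx ↦ let ⟨y, hy, hxy⟩ := hPQ x (hTP hx); ⟨y, hQS hy, hxy⟩)

section

variable {E : Type*} [NormedAddCommGroup E] [InnerProductSpace ℝ E]

def wulffShape (C ω : Set E) (g : E → ℝ) : Set E :=
  C ∩ ⋂ u ∈ ω, {x | ⟪x, u⟫ ≤ -g u}

variable {C ω : Set E} {g h : E → ℝ}

theorem mem_wulffShape {x : E} : x ∈ wulffShape C ω g ↔ x ∈ C ∧ ∀ u ∈ ω, ⟪x, u⟫ ≤ -g u := by
  simp [wulffShape]

theorem wulffShape_mono (hgh : ∀ u ∈ ω, g u ≤ h u) : wulffShape C ω h ⊆ wulffShape C ω g :=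
  fun _ hx ↦ mem_wulffShape.2
    ⟨(mem_wulffShape.1 hx).1, fun u hu ↦
      ((mem_wulffShape.1 hx).2 u hu).trans (by linarith [hgh u hu])⟩

theorem Convex.wulffShape (hC : Convex ℝ C) : Convex ℝ (wulffShape C ω g) :=
  hC.inter <| convex_iInter₂ fun u _ ↦
    convex_halfSpace_le ((innerₛₗ ℝ).flip u).isLinear _

theorem smul_mem_wulffShape (hC : ∀ x ∈ C, ∀ r : ℝ, 0 ≤ r → r • x ∈ C) {x : E} {r : ℝ}
    (hx : x ∈ wulffShape C ω g) (hr : 0 ≤ r) (hgh : ∀ u ∈ ω, h u ≤ r * g u) :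
    r • x ∈ wulffShape C ω h := by
  rw [mem_wulffShape] at hx ⊢
  refine ⟨hC x hx.1 r hr, fun u hu ↦ ?_⟩
  rw [real_inner_smul_left]
  nlinarith [hx.2 u hu, hgh u hu]

theorem exists_pos_mul_norm_le_inner [FiniteDimensional ℝ E] (hC_closed : IsClosed C)
    (hC_cone : ∀ x ∈ C, ∀ r : ℝ, 0 ≤ r → r • x ∈ C) {w : E}
    (hw : ∀ x ∈ C, x ≠ 0 → 0 < ⟪x, w⟫) : ∃ c > 0, ∀ x ∈ C, c * ‖x‖ ≤ ⟪x, w⟫ := by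
  obtain ⟨c, hc, hcS⟩ := ((isCompact_sphere (0 : E) 1).inter_left hC_closed).exists_forall_le'
    (by fun_prop : Continuous fun x : E ↦ ⟪x, w⟫).continuousOn
    fun x hx ↦ hw x hx.1 (ne_zero_of_mem_unit_sphere ⟨x, hx.2⟩)
  refine ⟨c, hc, fun x hx ↦ ?_⟩
  rcases eq_or_ne x 0 with rfl | hx0
  · simp
  have hxn : 0 < ‖x‖ := norm_pos_iff.2 hx0
  have := hcS (‖x‖⁻¹ • x) ⟨hC_cone x hx _ (by positivity), by simp [norm_smul, hxn.ne']⟩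
  rw [real_inner_smul_left, ← div_eq_inv_mul, le_div_iff₀ hxn] at this
  linarith

theorem exists_mem_ne_zero_of_interior_nonempty [Nontrivial E] (hC : (interior C).Nonempty) :
    ∃ y ∈ C, y ≠ 0 := by
  by_contra! h
  have : interior C ⊆ interior {0} := interior_mono fun y hy ↦ h y hy
  simpa [interior_singleton] using hC.mono this

theorem inner_neg_of_mem_interior_polar {u y : E}
    (hu : u ∈ interior {x | ∀ y ∈ C, ⟪x, y⟫ ≤ 0}) (hy : y ∈ C) (hy0 : y ≠ 0) : ⟪u, y⟫ < 0 := by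
  have hT : Tendsto (fun ε : ℝ ↦ u + ε • y) (𝓝[>] 0) (𝓝 u) := by
    refine tendsto_nhdsWithin_of_tendsto_nhds ?_
    have : Continuous fun ε : ℝ ↦ u + ε • y := by fun_prop
    simpa using this.tendsto 0
  obtain ⟨ε, hε, hε0⟩ :=
    ((hT.eventually (mem_interior_iff_mem_nhds.1 hu)).and self_mem_nhdsWithin).exists
  have := hε y hy
  rw [inner_add_left, real_inner_smul_left, real_inner_self_eq_norm_sq] at this
  have : 0 < ε * ‖y‖ ^ 2 := mul_pos hε0 (by positivity)
  linarith

theorem exists_mem_forall_inner_le (hC_cone : ∀ x ∈ C, ∀ r : ℝ, 0 ≤ r → r • x ∈ C)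
    (hω : IsCompact ω) (hωC : ω ⊆ interior {x | ∀ y ∈ C, ⟪x, y⟫ ≤ 0}) {y : E} (hy : y ∈ C)
    (hy0 : y ≠ 0) (B : ℝ) : ∃ z ∈ C, ∀ u ∈ ω, ⟪z, u⟫ ≤ -B := by
  obtain ⟨δ, hδ, hδω⟩ := hω.exists_forall_le'
    (by fun_prop : Continuous fun u : E ↦ -⟪u, y⟫).continuousOn
    fun u hu ↦ neg_pos.2 (inner_neg_of_mem_interior_polar (hωC hu) hy hy0)
  refine ⟨(max B 0 / δ) • y, hC_cone y hy _ (by positivity), fun u hu ↦ ?_⟩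
  have hu := hδω u hu
  rw [real_inner_smul_left, real_inner_comm]
  calc max B 0 / δ * ⟪u, y⟫ ≤ max B 0 / δ * (-δ) := by gcongr; linarith
    _ = -max B 0 := by field_simp
    _ ≤ -B := by simp

theorem exists_mem_inner_le_dist_le {K : Set E} (hK : Convex ℝ K) {y z w : E} {t κ : ℝ}
    (hy : y ∈ K) (hz : z ∈ K) (ht : 0 < t) (hzt : ⟪z, w⟫ ≤ t / 2) (hκ : 0 ≤ κ)
    (hyt : ⟪y, w⟫ ≤ (1 + κ) * t) : ∃ y' ∈ K, ⟪y', w⟫ ≤ t ∧ dist y y' ≤ 2 * κ * ‖y - z‖ := by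
  -- `s` makes the bound `(1 - s) (1 + κ) t + s t / 2` on `⟪y + s • (z - y), w⟫` equal to `t`
  set s := 2 * κ / (1 + 2 * κ)
  have hs0 : 0 ≤ s := by positivity
  have hs1 : s ≤ 1 := by rw [div_le_one (by positivity)]; linarith
  refine ⟨y + s • (z - y), hK.add_smul_sub_mem hy hz ⟨hs0, hs1⟩, ?_, ?_⟩
  · have h1s : (1 - s) * (1 + κ) * t + s * (t / 2) = t := by
      simp only [s]; field_simp; ring
    calc ⟪y + s • (z - y), w⟫ = (1 - s) * ⟪y, w⟫ + s * ⟪z, w⟫ := by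
          rw [inner_add_left, real_inner_smul_left, inner_sub_left]; ring
      _ ≤ (1 - s) * ((1 + κ) * t) + s * (t / 2) := by gcongr
      _ = t := by linarith
  · have hs : s ≤ 2 * κ := div_le_self (by positivity) (by linarith)
    rw [dist_self_add_right, norm_smul, Real.norm_of_nonneg hs0, norm_sub_rev]
    gcongr

theorem exists_near_mem_wulffShape_add (hC_conv : Convex ℝ C)
    (hC_cone : ∀ x ∈ C, ∀ r : ℝ, 0 ≤ r → r • x ∈ C) {w z x : E} {c m η t : ℝ} (hc₀ : 0 < c)
    (hc : ∀ x ∈ C, c * ‖x‖ ≤ ⟪x, w⟫) (hm : ∀ u ∈ ω, m ≤ g u) (hη : 0 < η) (hηm : 3 * η ≤ m)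
    (ht : 0 < t) (hz : z ∈ wulffShape C ω (fun u ↦ g u + η)) (hzt : ⟪z, w⟫ ≤ t / 2)
    (hx : x ∈ wulffShape C ω (fun u ↦ g u - η)) (hxt : ⟪x, w⟫ ≤ t) :
    ∃ y ∈ wulffShape C ω (fun u ↦ g u + η), ⟪y, w⟫ ≤ t ∧ dist x y ≤ 18 * t / (m * c) * η := by
  have hmη : 0 < m - η := by linarith
  set l := (m + η) / (m - η)
  have hl1 : 1 ≤ l := by rw [le_div_iff₀ hmη]; linarith
  have hl2 : l ≤ 2 := by rw [div_le_iff₀ hmη]; linarith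
  have hl3 : l - 1 ≤ 3 * η / m := by
    rw [div_sub_one hmη.ne', div_le_div_iff₀ hmη (by linarith)]; nlinarith
  have hlx : l • x ∈ wulffShape C ω (fun u ↦ g u + η) :=
    smul_mem_wulffShape hC_cone hx (by linarith) fun u hu ↦ by
      rw [div_mul_eq_mul_div, le_div_iff₀ hmη]; nlinarith [hm u hu]
  have hlxt : ⟪l • x, w⟫ ≤ (1 + (l - 1)) * t := by
    rw [real_inner_smul_left, add_sub_cancel]; gcongr
  obtain ⟨y, hy, hyt, hly⟩ :=
    exists_mem_inner_le_dist_le hC_conv.wulffShape hlx hz ht hzt (by linarith) hlxt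
  have hx_le : ‖x‖ ≤ t / c := by
    rw [le_div_iff₀ hc₀, mul_comm]; exact (hc x (mem_wulffShape.1 hx).1).trans hxt
  have hz_le : ‖z‖ ≤ t / 2 / c := by
    rw [le_div_iff₀ hc₀, mul_comm]; exact (hc z (mem_wulffShape.1 hz).1).trans hzt
  have hxlx : dist x (l • x) = (l - 1) * ‖x‖ := by
    rw [dist_comm, dist_eq_norm, ← norm_smul_of_nonneg (by linarith), sub_smul, one_smul]
  refine ⟨y, hy, hyt, ?_⟩
  calc dist x y ≤ dist x (l • x) + dist (l • x) y := dist_triangle _ _ _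
    _ ≤ (l - 1) * ‖x‖ + 2 * (l - 1) * (l * ‖x‖ + ‖z‖) := by
        have : ‖l • x - z‖ ≤ l * ‖x‖ + ‖z‖ := by
          simpa [norm_smul, abs_of_nonneg (by linarith : 0 ≤ l)] using norm_sub_le (l • x) z
        rw [hxlx]; gcongr
        exact hly.trans (mul_le_mul_of_nonneg_left this (by linarith))
    _ ≤ (l - 1) * (5 * ‖x‖ + 2 * ‖z‖) := by
        nlinarith [mul_nonneg (mul_nonneg (sub_nonneg.2 hl1) (norm_nonneg x)) (sub_nonneg.2 hl2)]
    _ ≤ (l - 1) * (5 * (t / c) + 2 * (t / 2 / c)) := by gcongr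
    _ = (l - 1) * (6 * t / c) := by ring
    _ ≤ 3 * η / m * (6 * t / c) := by gcongr
    _ = 18 * t / (m * c) * η := by field_simp; ring

theorem hausdorffDist_wulffShape_inter_le (hC_conv : Convex ℝ C)
    (hC_cone : ∀ x ∈ C, ∀ r : ℝ, 0 ≤ r → r • x ∈ C) {f : E → ℝ} {w z : E} {c m η t : ℝ}
    (hc₀ : 0 < c) (hc : ∀ x ∈ C, c * ‖x‖ ≤ ⟪x, w⟫) (hm : ∀ u ∈ ω, m ≤ g u) (hη : 0 < η)
    (hηm : 3 * η ≤ m) (ht : 0 < t) (hz : z ∈ wulffShape C ω (fun u ↦ g u + η))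
    (hzt : ⟪z, w⟫ ≤ t / 2) (hfg : ∀ u ∈ ω, |f u - g u| ≤ η) :
    Metric.hausdorffDist (wulffShape C ω f ∩ (C ∩ {x | ⟪x, w⟫ ≤ t}))
      (wulffShape C ω g ∩ (C ∩ {x | ⟪x, w⟫ ≤ t})) ≤ 18 * t / (m * c) * η := by
  have hm₀ : 0 < m := by linarith
  refine Metric.hausdorffDist_le_of_subset_of_forall (by positivity)
    (P := wulffShape C ω (fun u ↦ g u - η) ∩ (C ∩ {x | ⟪x, w⟫ ≤ t}))
    (Q := wulffShape C ω (fun u ↦ g u + η) ∩ (C ∩ {x | ⟪x, w⟫ ≤ t})) ?_ ?_ ?_ ?_ ?_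
  iterate 4
    exact inter_subset_inter_left _ <| wulffShape_mono fun u hu ↦ by
      linarith [abs_le.1 (hfg u hu)]
  · rintro x ⟨hx, -, hxt⟩
    obtain ⟨y, hy, hyt, hxy⟩ :=
      exists_near_mem_wulffShape_add hC_conv hC_cone hc₀ hc hm hη hηm ht hz hzt hx hxt
    exact ⟨y, ⟨hy, (mem_wulffShape.1 hy).1, hyt⟩, hxy⟩

end

theorem wulff_shape_convergence_general {n : ℕ}
    (C : Set (EuclideanSpace ℝ (Fin n)))
    (hC_closed : IsClosed C) (hC_conv : Convex ℝ C)
    (hC_cone : ∀ x ∈ C, ∀ r : ℝ, 0 ≤ r → r • x ∈ C)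
    (hC_int : (interior C).Nonempty)
    (ω : Set (EuclideanSpace ℝ (Fin n)))
    (hω : ω ⊆ Metric.sphere (0 : EuclideanSpace ℝ (Fin n)) 1 ∩
        interior {x : EuclideanSpace ℝ (Fin n) | ∀ y ∈ C, ⟪x, y⟫ ≤ 0})
    (hωcompact : IsCompact ω) (hωne : ω.Nonempty)
    (w : EuclideanSpace ℝ (Fin n))
    (hwpos : ∀ x ∈ C, x ≠ 0 → 0 < ⟪x, w⟫)
    (f : ℕ → EuclideanSpace ℝ (Fin n) → ℝ)
    (f₀ : EuclideanSpace ℝ (Fin n) → ℝ)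
    (hf₀pos : ∀ u ∈ ω, 0 < f₀ u) (hf₀cont : ContinuousOn f₀ ω)
    (hconv : TendstoUniformlyOn f f₀ atTop ω) :
    ∃ t₀ : ℝ, 0 < t₀ ∧ ∀ t : ℝ, t₀ ≤ t →
      Tendsto (fun j => Metric.hausdorffDist
          ((C ∩ ⋂ u ∈ ω, {x : EuclideanSpace ℝ (Fin n) | ⟪x, u⟫ ≤ -f j u}) ∩
            (C ∩ {x : EuclideanSpace ℝ (Fin n) | ⟪x, w⟫ ≤ t}))
          ((C ∩ ⋂ u ∈ ω, {x : EuclideanSpace ℝ (Fin n) | ⟪x, u⟫ ≤ -f₀ u}) ∩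
            (C ∩ {x : EuclideanSpace ℝ (Fin n) | ⟪x, w⟫ ≤ t})))
        atTop (𝓝 0) := by
  obtain ⟨u₀, hu₀⟩ := hωne
  have : Nontrivial (EuclideanSpace ℝ (Fin n)) :=
    nontrivial_of_ne u₀ 0 (ne_zero_of_mem_unit_sphere ⟨u₀, (hω hu₀).1⟩)
  obtain ⟨y₀, hy₀, hy₀0⟩ := exists_mem_ne_zero_of_interior_nonempty hC_int
  obtain ⟨c, hc₀, hc⟩ := exists_pos_mul_norm_le_inner hC_closed hC_cone hwpos
  obtain ⟨m, hm₀, hm⟩ := hωcompact.exists_forall_le' hf₀cont hf₀pos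
  obtain ⟨M, hM⟩ := hωcompact.bddAbove_image hf₀cont
  obtain ⟨z, hzC, hz⟩ := exists_mem_forall_inner_le hC_cone hωcompact
    (fun u hu ↦ (hω hu).2) hy₀ hy₀0 (M + 1)
  have hzw : 0 < ⟪z, w⟫ := hwpos z hzC <| by
    rintro rfl
    have := hz u₀ hu₀
    rw [inner_zero_left] at this
    linarith [hM (mem_image_of_mem f₀ hu₀), hf₀pos u₀ hu₀]
  refine ⟨2 * ⟪z, w⟫, by positivity, fun t ht ↦ Metric.tendsto_atTop.2 fun ε hε ↦ ?_⟩
  have ht₀ : 0 < t := by linarith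
  obtain ⟨η, hη, hηε, hη1, hηm⟩ : ∃ η > 0, 18 * t / (m * c) * η < ε ∧ η ≤ 1 ∧ 3 * η ≤ m := by
    obtain ⟨κ, hκ, hκε⟩ := exists_pos_mul_lt hε (18 * t / (m * c))
    refine ⟨min κ (min 1 (m / 3)), by positivity, ?_, ?_, ?_⟩
    · exact lt_of_le_of_lt (by gcongr; exact min_le_left _ _) hκε
    · exact (min_le_right _ _).trans (min_le_left _ _)
    · linarith [(min_le_right κ _).trans (min_le_right 1 (m / 3))]
  obtain ⟨N, hN⟩ := eventually_atTop.1 (Metric.tendstoUniformlyOn_iff.1 hconv η hη)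
  refine ⟨N, fun j hj ↦ ?_⟩
  have hzη : z ∈ wulffShape C ω (fun u ↦ f₀ u + η) :=
    mem_wulffShape.2 ⟨hzC, fun u hu ↦ by linarith [hz u hu, hM (mem_image_of_mem f₀ hu)]⟩
  have hfj : ∀ u ∈ ω, |f j u - f₀ u| ≤ η := fun u hu ↦ by
    rw [abs_sub_comm]; exact (hN j hj u hu).le
  rw [Real.dist_eq, sub_zero, abs_of_nonneg Metric.hausdorffDist_nonneg]
  exact (hausdorffDist_wulffShape_inter_le hC_conv hC_cone hc₀ hc hm hη hηm ht₀ hzη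
    (by linarith) hfj).trans_lt hηε

/-- Continuity of the Wulff shape: if positive continuous functions `f j` converge
uniformly on the nonempty compact set `ω ⊂ Ω_C` to `f₀`, then the associated Wulff
shapes converge, in the sense that the truncations `K_j ∩ C_t` converge to
`K₀ ∩ C_t` in the Hausdorff metric for all sufficiently large `t`. -/
theorem wulff_shape_convergence {n : ℕ}
    (C : Set (EuclideanSpace ℝ (Fin n)))
    (hC_closed : IsClosed C) (hC_conv : Convex ℝ C)
    (hC_cone : ∀ x ∈ C, ∀ r : ℝ, 0 ≤ r → r • x ∈ C)
    (hC_pointed : C ∩ (-C) = {0})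
    (hC_int : (interior C).Nonempty)
    (ω : Set (EuclideanSpace ℝ (Fin n)))
    (hω : ω ⊆ Metric.sphere (0 : EuclideanSpace ℝ (Fin n)) 1 ∩
        interior {x : EuclideanSpace ℝ (Fin n) | ∀ y ∈ C, ⟪x, y⟫ ≤ 0})
    (hωcompact : IsCompact ω) (hωne : ω.Nonempty)
    (w : EuclideanSpace ℝ (Fin n)) (hwnorm : ‖w‖ = 1)
    (hwpos : ∀ x ∈ C, x ≠ 0 → 0 < ⟪x, w⟫)
    (f : ℕ → EuclideanSpace ℝ (Fin n) → ℝ)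
    (f₀ : EuclideanSpace ℝ (Fin n) → ℝ)
    (hfpos : ∀ j, ∀ u ∈ ω, 0 < f j u) (hfcont : ∀ j, ContinuousOn (f j) ω)
    (hf₀pos : ∀ u ∈ ω, 0 < f₀ u) (hf₀cont : ContinuousOn f₀ ω)
    (hconv : TendstoUniformlyOn f f₀ atTop ω) :
    ∃ t₀ : ℝ, 0 < t₀ ∧ ∀ t : ℝ, t₀ ≤ t →
      Tendsto (fun j => Metric.hausdorffDist
          ((C ∩ ⋂ u ∈ ω, {x : EuclideanSpace ℝ (Fin n) | ⟪x, u⟫ ≤ -f j u}) ∩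
            (C ∩ {x : EuclideanSpace ℝ (Fin n) | ⟪x, w⟫ ≤ t}))
          ((C ∩ ⋂ u ∈ ω, {x : EuclideanSpace ℝ (Fin n) | ⟪x, u⟫ ≤ -f₀ u}) ∩
            (C ∩ {x : EuclideanSpace ℝ (Fin n) | ⟪x, w⟫ ≤ t})))
        atTop (𝓝 0) :=
  wulff_shape_convergence_general C hC_closed hC_conv hC_cone hC_int ω hω hωcompact hωne w hwpos f
    f₀ hf₀pos hf₀cont hconv
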